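/- arXiv:1612.03257 — 5 statements merged into one kernel-verified Lean document; each statement's English description precedes it below -/
import Mathlib

section
/- Let κ be a Markov kernel from a measurable space 𝒳 to a measurable space 𝒴, Θ a set, and ψ : Θ × 𝒴 × 𝒳 → ℝ^k measurable with ψ(θ, ·, ·) integrable with respect to κ_x for all θ, x and with respect to μ ⊗ κ for all probability measures μ on 𝒳. Suppose that for every probability measure μ on 𝒳 there is exactly one θ(μ) ∈ Θ with ∫∫ ψ(θ(μ), y, x) κ_x(dy) μ(dx) = 0. Then θ(μ) takes the same value θ₀ for all probability measures μ on 𝒳 if and only if there exists θ₀ ∈ Θ such that ∫ ψ(θ₀, y, x) κ_x(dy) = 0 for every x ∈ 𝒳. -/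
open MeasureTheory ProbabilityTheory

/-! Testing the unconditional estimating equation against the point mass at `x` recovers the
conditional equation at `x`, so a functional that is constant in the regressor distribution
solves every conditional equation. Conversely a conditional solution solves the unconditional
equation for every regressor distribution, and uniqueness identifies it with the functional. -/

section KernelIntegral

variable {𝒳 𝒴 E : Type*} [MeasurableSpace 𝒳] [MeasurableSpace 𝒴]
  [NormedAddCommGroup E] [NormedSpace ℝ E] [CompleteSpace E] (κ : Kernel 𝒳 𝒴) [IsSFiniteKernel κ]

theorem integral_dirac_integral_kernel {f : 𝒴 → 𝒳 → E}
    (hf : StronglyMeasurable (fun p : 𝒴 × 𝒳 => f p.1 p.2)) (x : 𝒳) :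
    ∫ x', ∫ y, f y x' ∂(κ x') ∂(Measure.dirac x) = ∫ y, f y x ∂(κ x) :=
  integral_dirac' _ x <|
    (hf.comp_measurable measurable_swap).integral_kernel_prod_right'

end KernelIntegral

theorem stmt_2_general {𝒳 𝒴 Θ : Type*} [MeasurableSpace 𝒳] [MeasurableSpace 𝒴]
    (κ : Kernel 𝒳 𝒴) [IsMarkovKernel κ] (k : ℕ)
    (ψ : Θ → 𝒴 → 𝒳 → EuclideanSpace ℝ (Fin k))
    (hψ_meas : ∀ θ, Measurable (fun p : 𝒴 × 𝒳 => ψ θ p.1 p.2))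
    -- the EE functional: for every regressor distribution there is exactly one solution
    (T : Measure 𝒳 → Θ)
    (hT_sol : ∀ (μ : Measure 𝒳) [IsProbabilityMeasure μ],
      ∫ x, ∫ y, ψ (T μ) y x ∂(κ x) ∂μ = 0)
    (hT_unique : ∀ (μ : Measure 𝒳) [IsProbabilityMeasure μ], ∀ θ : Θ,
      ∫ x, ∫ y, ψ θ y x ∂(κ x) ∂μ = 0 → θ = T μ) :
    (∃ θ₀ : Θ, ∀ (μ : Measure 𝒳) [IsProbabilityMeasure μ], T μ = θ₀) ↔
      (∃ θ₀ : Θ, ∀ x : 𝒳, ∫ y, ψ θ₀ y x ∂(κ x) = 0) := by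
  constructor
  · rintro ⟨θ₀, hT⟩
    refine ⟨θ₀, fun x => ?_⟩
    have h := hT_sol (Measure.dirac x)
    rwa [hT (Measure.dirac x), integral_dirac_integral_kernel κ (hψ_meas θ₀).stronglyMeasurable x] at h
  · rintro ⟨θ₀, hθ₀⟩
    exact ⟨θ₀, fun μ _ => (hT_unique μ θ₀ (by simp only [hθ₀, integral_zero])).symm⟩

/-- An EE regression functional is well-specified for the conditional response
distribution `κ` iff the estimating equations hold conditionally at a single `θ₀`
across all of regressor space. -/
theorem stmt_2 {𝒳 𝒴 Θ : Type*} [MeasurableSpace 𝒳] [MeasurableSpace 𝒴]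
    (κ : Kernel 𝒳 𝒴) [IsMarkovKernel κ] (k : ℕ)
    (ψ : Θ → 𝒴 → 𝒳 → EuclideanSpace ℝ (Fin k))
    (hψ_meas : ∀ θ, Measurable (fun p : 𝒴 × 𝒳 => ψ θ p.1 p.2))
    (hψ_int : ∀ θ x, Integrable (fun y => ψ θ y x) (κ x))
    (hψ_int' : ∀ θ (μ : Measure 𝒳) [IsProbabilityMeasure μ],
      Integrable (fun x => ∫ y, ψ θ y x ∂(κ x)) μ)
    -- the EE functional: for every regressor distribution there is exactly one solution
    (T : Measure 𝒳 → Θ)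
    (hT_sol : ∀ (μ : Measure 𝒳) [IsProbabilityMeasure μ],
      ∫ x, ∫ y, ψ (T μ) y x ∂(κ x) ∂μ = 0)
    (hT_unique : ∀ (μ : Measure 𝒳) [IsProbabilityMeasure μ], ∀ θ : Θ,
      ∫ x, ∫ y, ψ θ y x ∂(κ x) ∂μ = 0 → θ = T μ) :
    (∃ θ₀ : Θ, ∀ (μ : Measure 𝒳) [IsProbabilityMeasure μ], T μ = θ₀) ↔
      (∃ θ₀ : Θ, ∀ x : 𝒳, ∫ y, ψ θ₀ y x ∂(κ x) = 0) :=
  stmt_2_general κ k ψ hψ_meas T hT_sol hT_unique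
end

section
/- Let κ be a Markov kernel from a measurable space 𝒳 to a measurable space 𝒴, μ a probability measure on 𝒳, P = μ ⊗ κ the joint distribution, and θ(·) a real-valued functional on probability measures on 𝒳 × 𝒴. Suppose there is a measurable function ψ : 𝒳 × 𝒴 → ℝ, integrable under μ ⊗ κ and under κ_x for each x, with ∫ ψ dP = 0, such that for every probability measure P' on 𝒳 × 𝒴 in the admissible class the map t ↦ θ((1−t)P + tP') is differentiable at t = 0 with derivative ∫ ψ dP'. Then for every x ∈ 𝒳 with δ_x ⊗ κ admissible, the map t ↦ θ(((1−t)μ + tδ_x) ⊗ κ) is differentiable at t = 0 with derivative equal to ∫ ψ(x, y) κ_x(dy); that is, the partial influence function with respect to the regressor distribution equals the conditional expectation of the full influence function given X = x. -/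
/-!
Mixing the regressor distribution commutes with composing with `κ`:
`((1-t)μ + tδₓ) ⊗ κ = (1-t)(μ ⊗ κ) + t(δₓ ⊗ κ)`. So the perturbation in the regressor direction
is the full perturbation in the direction `δₓ ⊗ κ`, whose Gateaux derivative is
`∫ ψ d(δₓ ⊗ κ) = ∫ ψ(x, y) κₓ(dy)`.
-/

open MeasureTheory ProbabilityTheory

/-- The convex mixture `(1-t)·P + t·P'` of two measures, defined for real `t`. -/
noncomputable def mixM {Z : Type*} [MeasurableSpace Z] (P P' : Measure Z) (t : ℝ) :
    Measure Z :=
  ENNReal.ofReal (1 - t) • P + ENNReal.ofReal t • P'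

namespace ProbabilityTheory

variable {𝒳 𝒴 : Type*} [MeasurableSpace 𝒳] [MeasurableSpace 𝒴]
  (κ : Kernel 𝒳 𝒴) [IsSFiniteKernel κ]

lemma dirac_compProd_eq_map (x : 𝒳) :
    Measure.dirac x ⊗ₘ κ = (κ x).map (Prod.mk x) := by
  ext s hs
  rw [Measure.compProd_apply hs, lintegral_dirac' _ (Kernel.measurable_kernel_prodMk_left hs),
    Measure.map_apply measurable_prodMk_left hs]

lemma integral_dirac_compProd {E : Type*} [NormedAddCommGroup E] [NormedSpace ℝ E]
    {f : 𝒳 × 𝒴 → E} (hf : StronglyMeasurable f) (x : 𝒳) :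
    ∫ p, f p ∂(Measure.dirac x ⊗ₘ κ) = ∫ y, f (x, y) ∂(κ x) := by
  rw [dirac_compProd_eq_map, integral_map measurable_prodMk_left.aemeasurable
    hf.aestronglyMeasurable]

lemma mixM_compProd (μ ν : Measure 𝒳) [SFinite μ] [SFinite ν] (t : ℝ) :
    mixM μ ν t ⊗ₘ κ = mixM (μ ⊗ₘ κ) (ν ⊗ₘ κ) t := by
  rw [mixM, mixM, Measure.compProd_add_left, Measure.compProd_smul_left,
    Measure.compProd_smul_left]

end ProbabilityTheory

theorem stmt_3_general {𝒳 𝒴 : Type*} [MeasurableSpace 𝒳] [MeasurableSpace 𝒴]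
    (κ : Kernel 𝒳 𝒴) [IsMarkovKernel κ]
    (μ : Measure 𝒳) [IsProbabilityMeasure μ]
    (θ : Measure (𝒳 × 𝒴) → ℝ)
    (𝒜 : Set (Measure (𝒳 × 𝒴)))
    (ψ : 𝒳 × 𝒴 → ℝ)
    (hψ_meas : Measurable ψ)
    (hIC : ∀ P' ∈ 𝒜,
      HasDerivAt (fun t => θ (mixM (μ.compProd κ) P' t)) (∫ p, ψ p ∂P') 0) :
    ∀ x : 𝒳, (Measure.dirac x).compProd κ ∈ 𝒜 →
      HasDerivAt (fun t => θ ((mixM μ (Measure.dirac x) t).compProd κ))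
        (∫ y, ψ (x, y) ∂(κ x)) 0 := by
  intro x hx
  have hderiv := hIC _ hx
  rw [integral_dirac_compProd κ hψ_meas.stronglyMeasurable x] at hderiv
  simpa only [mixM_compProd] using hderiv

/-- The partial influence function with regard to the regressor distribution equals the
conditional expectation of the full influence function given `X = x`. -/
theorem stmt_3 {𝒳 𝒴 : Type*} [MeasurableSpace 𝒳] [MeasurableSpace 𝒴]
    (κ : Kernel 𝒳 𝒴) [IsMarkovKernel κ]
    (μ : Measure 𝒳) [IsProbabilityMeasure μ]
    (θ : Measure (𝒳 × 𝒴) → ℝ)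
    (𝒜 : Set (Measure (𝒳 × 𝒴)))
    (h𝒜 : ∀ P' ∈ 𝒜, IsProbabilityMeasure P')
    (ψ : 𝒳 × 𝒴 → ℝ)
    (hψ_meas : Measurable ψ)
    (hψ_int : Integrable ψ (μ.compProd κ))
    (hψ_int' : ∀ x, Integrable (fun y => ψ (x, y)) (κ x))
    (hψ_mean : ∫ p, ψ p ∂(μ.compProd κ) = 0)
    (hIC : ∀ P' ∈ 𝒜,
      HasDerivAt (fun t => θ (mixM (μ.compProd κ) P' t)) (∫ p, ψ p ∂P') 0) :
    ∀ x : 𝒳, (Measure.dirac x).compProd κ ∈ 𝒜 →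
      HasDerivAt (fun t => θ ((mixM μ (Measure.dirac x) t).compProd κ))
        (∫ y, ψ (x, y) ∂(κ x)) 0 :=
  stmt_3_general κ μ θ 𝒜 ψ hψ_meas hIC
end

section
/- Let κ be a Markov kernel from a measurable space 𝒳 to a measurable space 𝒴 and θ(·) a real-valued functional on joint probability measures on 𝒳 × 𝒴. Suppose there is a function ic : 𝒳 × 𝒫(𝒳) → ℝ (where 𝒫(𝒳) is the set of probability measures on 𝒳) such that (i) ∫ ic(x, ν) ν(dx) = 0 for all ν, (ii) for all probability measures μ, μ' on 𝒳 the map g(t) := θ(((1−t)μ + tμ') ⊗ κ) is differentiable on [0,1] with g'(t) = ∫ ic(x, (1−t)μ + tμ') μ'(dx), and (iii) ic(x, ν) = (d/dt)|_{t=0} θ(((1−t)ν + tδ_x) ⊗ κ) for all x, ν. Then θ is well-specified for κ (i.e., θ(μ ⊗ κ) = θ(μ' ⊗ κ) for all probability measures μ, μ' on 𝒳) if and only if ic(x, ν) = 0 for all x ∈ 𝒳 and all probability measures ν on 𝒳. -/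
/-!
Everything happens along the segment `g t = θ (((1 - t) μ + t μ') ⊗ κ)`, `t ∈ [0, 1]`, whose
points are probability measures. If θ is well-specified, `g` is constant on `[0, 1]`; for
`μ' = δₓ` its derivative at `0` is `ic x ν`, and a derivative at the endpoint `0` is already
determined by the values on `[0, 1]`, so it vanishes.
Conversely, if `ic ≡ 0` then `g' ≡ 0` on `[0, 1]`, hence `g 0 = g 1`.
-/

open MeasureTheory ProbabilityTheory

open Set

section Mixture

variable {Z : Type*} [MeasurableSpace Z]

@[simp]
lemma mixM_zero (P P' : Measure Z) : mixM P P' 0 = P := by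
  simp [mixM]

@[simp]
lemma mixM_one (P P' : Measure Z) : mixM P P' 1 = P' := by
  simp [mixM]

lemma isProbabilityMeasure_mixM (P P' : Measure Z) [IsProbabilityMeasure P]
    [IsProbabilityMeasure P'] {t : ℝ} (ht : t ∈ Icc (0 : ℝ) 1) :
    IsProbabilityMeasure (mixM P P' t) := by
  constructor
  have h1t : (0 : ℝ) ≤ 1 - t := by linarith [ht.2]
  simp [mixM, ← ENNReal.ofReal_add h1t ht.1]

end Mixture

section Calculus

variable {E : Type*} [NormedAddCommGroup E] [NormedSpace ℝ E] {f : ℝ → E} {a b : ℝ}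

lemma eq_of_hasDerivAt_zero_on_Icc (hab : a ≤ b) (hf : ∀ t ∈ Icc a b, HasDerivAt f 0 t) :
    f b = f a :=
  constant_of_has_deriv_right_zero (fun t ht => (hf t ht).continuousAt.continuousWithinAt)
    (fun t ht => (hf t (Ico_subset_Icc_self ht)).hasDerivWithinAt) b ⟨hab, le_rfl⟩

lemma HasDerivAt.eq_zero_of_eqOn_Icc {f' c : E} (hab : a < b) (hf : HasDerivAt f f' a)
    (hc : ∀ t ∈ Icc a b, f t = c) : f' = 0 :=
  (uniqueDiffOn_Icc hab a (left_mem_Icc.2 hab.le)).eq_deriv _ hf.hasDerivWithinAt <|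
    (hasDerivWithinAt_const a _ c).congr hc (hc a (left_mem_Icc.2 hab.le))

end Calculus

theorem stmt_4_general {𝒳 𝒴 : Type*} [MeasurableSpace 𝒳] [MeasurableSpace 𝒴]
    (κ : Kernel 𝒳 𝒴)
    (θ : Measure (𝒳 × 𝒴) → ℝ)
    (ic : 𝒳 → Measure 𝒳 → ℝ)
    -- (ii) differentiability along mixture segments, with derivative given by `ic`
    (h_deriv : ∀ (μ μ' : Measure 𝒳) [IsProbabilityMeasure μ] [IsProbabilityMeasure μ'],
      ∀ t ∈ Set.Icc (0 : ℝ) 1,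
        HasDerivAt (fun s => θ ((mixM μ μ' s).compProd κ))
          (∫ x, ic x (mixM μ μ' t) ∂μ') t)
    -- (iii) `ic` is the derivative at 0 in the directions of point masses
    (h_ic : ∀ (x : 𝒳) (ν : Measure 𝒳) [IsProbabilityMeasure ν],
      HasDerivAt (fun t => θ ((mixM ν (Measure.dirac x) t).compProd κ)) (ic x ν) 0) :
    (∀ (μ μ' : Measure 𝒳) [IsProbabilityMeasure μ] [IsProbabilityMeasure μ'],
        θ (μ.compProd κ) = θ (μ'.compProd κ)) ↔
      (∀ (x : 𝒳) (ν : Measure 𝒳) [IsProbabilityMeasure ν], ic x ν = 0) := by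
  constructor
  · intro h_wellSpecified x ν _
    refine (h_ic x ν).eq_zero_of_eqOn_Icc (c := θ (ν.compProd κ)) zero_lt_one fun t ht => ?_
    have := isProbabilityMeasure_mixM ν (Measure.dirac x) ht
    exact h_wellSpecified _ ν
  · intro h_zero μ μ' _ _
    have h_flat : ∀ t ∈ Icc (0 : ℝ) 1,
        HasDerivAt (fun s => θ ((mixM μ μ' s).compProd κ)) 0 t := fun t ht => by
      have := isProbabilityMeasure_mixM μ μ' ht
      simpa only [h_zero, integral_zero] using h_deriv μ μ' t ht
    simpa only [mixM_zero, mixM_one] using (eq_of_hasDerivAt_zero_on_Icc zero_le_one h_flat).symm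

/-- A regression functional with partial influence function `ic` (with regard to the
regressor distribution) is well-specified for `κ` iff `ic` vanishes identically. -/
theorem stmt_4 {𝒳 𝒴 : Type*} [MeasurableSpace 𝒳] [MeasurableSpace 𝒴]
    (κ : Kernel 𝒳 𝒴) [IsMarkovKernel κ]
    (θ : Measure (𝒳 × 𝒴) → ℝ)
    (ic : 𝒳 → Measure 𝒳 → ℝ)
    -- (i) the partial influence function integrates to zero
    (h_mean : ∀ (ν : Measure 𝒳) [IsProbabilityMeasure ν], ∫ x, ic x ν ∂ν = 0)
    -- (ii) differentiability along mixture segments, with derivative given by `ic`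
    (h_deriv : ∀ (μ μ' : Measure 𝒳) [IsProbabilityMeasure μ] [IsProbabilityMeasure μ'],
      ∀ t ∈ Set.Icc (0 : ℝ) 1,
        HasDerivAt (fun s => θ ((mixM μ μ' s).compProd κ))
          (∫ x, ic x (mixM μ μ' t) ∂μ') t)
    -- (iii) `ic` is the derivative at 0 in the directions of point masses
    (h_ic : ∀ (x : 𝒳) (ν : Measure 𝒳) [IsProbabilityMeasure ν],
      HasDerivAt (fun t => θ ((mixM ν (Measure.dirac x) t).compProd κ)) (ic x ν) 0) :
    (∀ (μ μ' : Measure 𝒳) [IsProbabilityMeasure μ] [IsProbabilityMeasure μ'],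
        θ (μ.compProd κ) = θ (μ'.compProd κ)) ↔
      (∀ (x : 𝒳) (ν : Measure 𝒳) [IsProbabilityMeasure ν], ic x ν = 0) :=
  stmt_4_general κ θ ic h_deriv h_ic
end

section
/- Let κ be a Markov kernel from a measurable space 𝒳 to a measurable space 𝒴, let 𝒜 be a class of probability measures on 𝒳, and let θ(·) be a functional on joint probability measures on 𝒳 × 𝒴 that is well-specified for κ on 𝒜, i.e., θ(μ ⊗ κ) = θ(μ' ⊗ κ) for all μ, μ' ∈ 𝒜. Then for every μ ∈ 𝒜 and every measurable weight w : 𝒳 → [0,∞) with ∫ w dμ = 1 and w·μ ∈ 𝒜, the functional is unchanged under reweighting of the joint distribution by w(x): θ evaluated at the measure with density (x,y) ↦ w(x) with respect to μ ⊗ κ equals θ(μ ⊗ κ). -/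
open MeasureTheory ProbabilityTheory
open scoped NNReal ENNReal

namespace MeasureTheory.Measure

theorem compProd_withDensity_left {α β : Type*} {mα : MeasurableSpace α} {mβ : MeasurableSpace β}
    {μ : Measure α} [SFinite μ] {κ : Kernel α β} [IsSFiniteKernel κ] {f : α → ℝ≥0∞}
    (hf : Measurable f) :
    (μ.withDensity f) ⊗ₘ κ = (μ ⊗ₘ κ).withDensity (fun p ↦ f p.1) := by
  refine ext_of_lintegral _ fun φ hφ ↦ ?_
  rw [lintegral_compProd hφ, lintegral_withDensity_eq_lintegral_mul _ hf (by fun_prop),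
    lintegral_withDensity_eq_lintegral_mul _ (by fun_prop) hφ, lintegral_compProd (by fun_prop)]
  refine lintegral_congr fun a ↦ ?_
  rw [Pi.mul_apply, ← lintegral_const_mul _ (by fun_prop)]
  rfl

end MeasureTheory.Measure

/-- A regression functional that is well-specified for `κ` is unchanged under
reweighting of the joint distribution by a weight function of the regressors. -/
theorem stmt_6 {𝒳 𝒴 : Type*} [MeasurableSpace 𝒳] [MeasurableSpace 𝒴]
    (κ : Kernel 𝒳 𝒴) [IsMarkovKernel κ]
    (𝒜 : Set (Measure 𝒳))
    (h𝒜 : ∀ μ ∈ 𝒜, IsProbabilityMeasure μ)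
    (θ : Measure (𝒳 × 𝒴) → ℝ)
    (h_wellspec : ∀ μ ∈ 𝒜, ∀ μ' ∈ 𝒜, θ (μ.compProd κ) = θ (μ'.compProd κ)) :
    ∀ μ ∈ 𝒜, ∀ w : 𝒳 → ℝ≥0, Measurable w →
      ∫⁻ x, (w x : ℝ≥0∞) ∂μ = 1 →
      μ.withDensity (fun x => (w x : ℝ≥0∞)) ∈ 𝒜 →
      θ ((μ.compProd κ).withDensity (fun p : 𝒳 × 𝒴 => (w p.1 : ℝ≥0∞))) =
        θ (μ.compProd κ) := by
  intro μ hμ w hw _ hwμ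
  have := h𝒜 μ hμ
  rw [← Measure.compProd_withDensity_left hw.coe_nnreal_ennreal]
  exact h_wellspec _ hwμ _ hμ
end

section
/- Let κ be a Markov kernel from ℝ^p (with Borel σ-algebra) to ℝ with conditional mean m(x) := ∫ y κ_x(dy), assumed finite for all x, and let β₀ ∈ ℝ^p. Suppose that the normal equations hold at β₀ for every acceptable regressor distribution: ∫ x (m(x) − β₀ᵀx) μ(dx) = 0 for every finitely supported probability measure μ on ℝ^p whose second-moment matrix ∫ x xᵀ μ(dx) is invertible. Then m(x) = β₀ᵀx for every x ∈ ℝ^p with x ≠ 0. -/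
/-!
Fix `x ≠ 0` and a coordinate `j` with `x j ≠ 0`. For `0 ≤ t < 1` the design
`t δ_x + (1 - t)/p ∑ₖ δ_{eₖ}` has second-moment matrix `t x xᵀ + (1 - t)/p · I`, which is
positive definite, so the `j`-th normal equation applies to it. Writing `r` for the residual
`m - β₀ᵀ·`, that equation reads `t x_j r(x) + (1 - t)/p · r(e_j) = 0`. At `t = 0` it gives
`r(e_j) = 0`, and then at `t = 1/2` it gives `x_j r(x) = 0`, hence `r(x) = 0`.
-/

open MeasureTheory ProbabilityTheory Matrix
open scoped NNReal ENNReal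

theorem integral_sum_ofReal_smul_dirac {E ι : Type*} [MeasurableSpace E]
    [MeasurableSingletonClass E] [Fintype ι] (pts : ι → E) {w : ι → ℝ} (hw : ∀ i, 0 ≤ w i)
    (f : E → ℝ) :
    ∫ z, f z ∂(∑ i, ENNReal.ofReal (w i) • Measure.dirac (pts i)) = ∑ i, w i * f (pts i) := by
  rw [integral_finsetSum_measure fun i _ =>
    (integrable_dirac (by simp)).smul_measure ENNReal.ofReal_ne_top]
  simp [integral_smul_measure, hw]

noncomputable def secondMoment {ι : Type*} [Fintype ι] (μ : Measure (EuclideanSpace ℝ ι)) :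
    Matrix ι ι ℝ :=
  Matrix.of fun j k => ∫ x, x j * x k ∂μ

theorem isUnit_det_smul_vecMulVec_add_smul_one {ι : Type*} [Fintype ι] [DecidableEq ι]
    (a : ι → ℝ) {t c : ℝ} (ht : 0 ≤ t) (hc : 0 < c) :
    IsUnit (t • vecMulVec a a + c • (1 : Matrix ι ι ℝ)).det := by
  have hrank_one : (t • vecMulVec a a).PosSemidef := by
    simpa only [star_trivial] using (posSemidef_vecMulVec_self_star a).smul ht
  exact (isUnit_iff_isUnit_det _).mp (PosDef.posSemidef_add hrank_one (PosDef.one.smul hc)).isUnit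

section Probe

variable {p : ℕ}

noncomputable def probePoints (x : EuclideanSpace ℝ (Fin p)) :
    Fin (p + 1) → EuclideanSpace ℝ (Fin p) :=
  Fin.cons x fun k => EuclideanSpace.single k 1

noncomputable def probeWeights (p : ℕ) (t : ℝ) : Fin (p + 1) → ℝ :=
  Fin.cons t fun _ => (1 - t) / p

noncomputable def probeMeasure (x : EuclideanSpace ℝ (Fin p)) (t : ℝ) :
    Measure (EuclideanSpace ℝ (Fin p)) :=
  ∑ i, ENNReal.ofReal (probeWeights p t i) • Measure.dirac (probePoints x i)

theorem probeWeights_nonneg {t : ℝ} (ht₀ : 0 ≤ t) (ht₁ : t ≤ 1) (i : Fin (p + 1)) :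
    0 ≤ probeWeights p t i := by
  refine Fin.cases ht₀ (fun _ => ?_) i
  simp only [probeWeights, Fin.cons_succ]
  exact div_nonneg (by linarith) p.cast_nonneg

theorem sum_probeWeights (hp : 0 < p) {t : ℝ} (ht₀ : 0 ≤ t) (ht₁ : t ≤ 1) :
    ∑ i, ENNReal.ofReal (probeWeights p t i) = 1 := by
  rw [← ENNReal.ofReal_sum_of_nonneg fun i _ => probeWeights_nonneg ht₀ ht₁ i]
  simp only [probeWeights, Fin.sum_univ_succ, Fin.cons_zero, Fin.cons_succ, Finset.sum_const,
    Finset.card_univ, Fintype.card_fin, nsmul_eq_mul, ENNReal.ofReal_eq_one]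
  field_simp
  ring

theorem integral_probeMeasure (x : EuclideanSpace ℝ (Fin p)) {t : ℝ} (ht₀ : 0 ≤ t) (ht₁ : t ≤ 1)
    (f : EuclideanSpace ℝ (Fin p) → ℝ) :
    ∫ z, f z ∂probeMeasure x t
      = t * f x + (1 - t) / p * ∑ k, f (EuclideanSpace.single k 1) := by
  rw [probeMeasure, integral_sum_ofReal_smul_dirac _ (probeWeights_nonneg ht₀ ht₁)]
  simp [Fin.sum_univ_succ, probeWeights, probePoints, Finset.mul_sum]

theorem secondMoment_probeMeasure (x : EuclideanSpace ℝ (Fin p)) {t : ℝ} (ht₀ : 0 ≤ t)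
    (ht₁ : t ≤ 1) :
    secondMoment (probeMeasure x t) = t • vecMulVec x.ofLp x.ofLp + ((1 - t) / p) • 1 := by
  ext j k
  simp [secondMoment, integral_probeMeasure x ht₀ ht₁, vecMulVec_apply, one_apply]

theorem integral_mul_probeMeasure (x : EuclideanSpace ℝ (Fin p)) {t : ℝ} (ht₀ : 0 ≤ t)
    (ht₁ : t ≤ 1) (r : EuclideanSpace ℝ (Fin p) → ℝ) (j : Fin p) :
    ∫ z, z j * r z ∂probeMeasure x t
      = t * (x j * r x) + (1 - t) / p * r (EuclideanSpace.single j 1) := by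
  simp [integral_probeMeasure x ht₀ ht₁]

end Probe

theorem eq_zero_of_normal_equations {p : ℕ} (r : EuclideanSpace ℝ (Fin p) → ℝ)
    (h : ∀ (n : ℕ) (pts : Fin n → EuclideanSpace ℝ (Fin p)) (w : Fin n → ℝ≥0∞),
      (∑ i, w i) = 1 → IsUnit (secondMoment (∑ i, w i • Measure.dirac (pts i))).det →
      ∀ j : Fin p, ∫ z, z j * r z ∂(∑ i, w i • Measure.dirac (pts i)) = 0)
    {x : EuclideanSpace ℝ (Fin p)} (hx : x ≠ 0) : r x = 0 := by
  obtain ⟨j, hj⟩ : ∃ j, x j ≠ 0 := by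
    contrapose! hx
    ext j
    exact hx j
  have hp : 0 < p := j.pos
  have probe (t : ℝ) (ht₀ : 0 ≤ t) (ht₁ : t < 1) :
      t * (x j * r x) + (1 - t) / p * r (EuclideanSpace.single j 1) = 0 := by
    have hc : 0 < (1 - t) / p := div_pos (by linarith) (by exact_mod_cast hp)
    have hdet : IsUnit (secondMoment (probeMeasure x t)).det := by
      rw [secondMoment_probeMeasure x ht₀ ht₁.le]
      exact isUnit_det_smul_vecMulVec_add_smul_one _ ht₀ hc
    have hnormal : ∫ z, z j * r z ∂probeMeasure x t = 0 :=
      h _ _ _ (sum_probeWeights hp ht₀ ht₁.le) hdet j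
    rwa [integral_mul_probeMeasure x ht₀ ht₁.le] at hnormal
  have hbasis : r (EuclideanSpace.single j 1) = 0 := by
    simpa [hp.ne'] using probe 0 le_rfl one_pos
  simpa [hbasis, hj] using probe (1 / 2) (by norm_num) (by norm_num)

theorem stmt_12_general {p : ℕ}
    (κ : Kernel (EuclideanSpace ℝ (Fin p)) ℝ)
    (β₀ : EuclideanSpace ℝ (Fin p))
    (h_normal : ∀ (n : ℕ) (pts : Fin n → EuclideanSpace ℝ (Fin p)) (w : Fin n → ℝ≥0∞),
      (∑ i : Fin n, w i) = 1 →
      IsUnit (Matrix.of fun j k =>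
        ∫ x, x j * x k ∂(∑ i : Fin n, w i • Measure.dirac (pts i))).det →
      ∀ j : Fin p,
        ∫ x, x j * ((∫ y, y ∂(κ x)) - ∑ i, β₀ i * x i)
          ∂(∑ i : Fin n, w i • Measure.dirac (pts i)) = 0) :
    ∀ x : EuclideanSpace ℝ (Fin p), x ≠ 0 → ∫ y, y ∂(κ x) = ∑ i, β₀ i * x i :=
  fun _ hx => sub_eq_zero.mp <|
    eq_zero_of_normal_equations (fun z => ∫ y, y ∂(κ z) - ∑ i, β₀ i * z i) h_normal hx

/-- If the normal equations hold at `β₀` under every acceptable (non-collinear) finitely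
supported regressor distribution, the conditional mean function is linear with slope
`β₀` away from the origin. -/
theorem stmt_12 {p : ℕ}
    (κ : Kernel (EuclideanSpace ℝ (Fin p)) ℝ) [IsMarkovKernel κ]
    (hκ_int : ∀ x, Integrable (fun y => y) (κ x))
    (β₀ : EuclideanSpace ℝ (Fin p))
    (h_normal : ∀ (n : ℕ) (pts : Fin n → EuclideanSpace ℝ (Fin p)) (w : Fin n → ℝ≥0∞),
      (∑ i : Fin n, w i) = 1 →
      IsUnit (Matrix.of fun j k =>
        ∫ x, x j * x k ∂(∑ i : Fin n, w i • Measure.dirac (pts i))).det →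
      ∀ j : Fin p,
        ∫ x, x j * ((∫ y, y ∂(κ x)) - ∑ i, β₀ i * x i)
          ∂(∑ i : Fin n, w i • Measure.dirac (pts i)) = 0) :
    ∀ x : EuclideanSpace ℝ (Fin p), x ≠ 0 → ∫ y, y ∂(κ x) = ∑ i, β₀ i * x i :=
  stmt_12_general κ β₀ h_normal
end
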